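/- Every convex region in the plane contained in a hexagon H whose sides are parallel to the sides of a fixed regular hexagon satisfies A(H) ≤ (√3/24)·b(H)², where b(H) is the perimeter of H and A(H) its area; in particular, among hexagons of fixed perimeter with sides in three fixed directions pairwise at 60°, the regular hexagon has maximal area. -/

import Mathlib

open MeasureTheory

/-- The three side-directions of a fixed regular hexagon (pairwise at 60°). -/
noncomputable def hexDir (k : Fin 3) : EuclideanSpace ℝ (Fin 2) :=
  (WithLp.equiv 2 (Fin 2 → ℝ)).symm
    ![Real.cos ((k : ℝ) * Real.pi / 3), Real.sin ((k : ℝ) * Real.pi / 3)]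

/-! ### Auxiliary definitions and lemmas -/

/-- A linear functional on the Euclidean plane given by its two coefficients. -/
noncomputable def lf (α β : ℝ) : EuclideanSpace ℝ (Fin 2) →ₗ[ℝ] ℝ where
  toFun x := α * x 0 + β * x 1
  map_add' x y := by
    show α * (x 0 + y 0) + β * (x 1 + y 1) = _
    ring
  map_smul' c x := by
    show α * (c * x 0) + β * (c * x 1) = _
    simp only [RingHom.id_apply, smul_eq_mul]
    ring

@[simp] lemma lf_apply (α β : ℝ) (x : EuclideanSpace ℝ (Fin 2)) :
    lf α β x = α * x 0 + β * x 1 := rfl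

noncomputable def ph0 := lf 1 (Real.sqrt 3)⁻¹
noncomputable def ph1 := lf 1 (-(Real.sqrt 3)⁻¹)
noncomputable def ph2 := lf 0 (2 * (Real.sqrt 3)⁻¹)

lemma ph1_eq (x : EuclideanSpace ℝ (Fin 2)) : ph1 x = ph0 x - ph2 x := by
  simp [ph0, ph1, ph2]; ring

lemma hexDir_zero (k : Fin 3) : (hexDir k) 0 = Real.cos ((k : ℝ) * Real.pi / 3) := rfl
lemma hexDir_one (k : Fin 3) : (hexDir k) 1 = Real.sin ((k : ℝ) * Real.pi / 3) := rfl

lemma norm_hexDir (k : Fin 3) : ‖hexDir k‖ = 1 := by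
  rw [EuclideanSpace.norm_eq]
  rw [Fin.sum_univ_two]
  rw [hexDir_zero, hexDir_one]
  rw [Real.norm_eq_abs, Real.norm_eq_abs, sq_abs, sq_abs,
    Real.cos_sq_add_sin_sq]
  exact Real.sqrt_one

lemma abs_sum_hexDir (k : Fin 3) :
    |ph0 (hexDir k)| + |ph1 (hexDir k)| + |ph2 (hexDir k)| ≤ 2 := by
  have hs : (Real.sqrt 3) > 0 := Real.sqrt_pos.mpr (by norm_num)
  have hss : Real.sqrt 3 * Real.sqrt 3 = 3 := Real.mul_self_sqrt (by norm_num)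
  fin_cases k <;>
    simp only [ph0, ph1, ph2, lf_apply, hexDir_zero, hexDir_one]
  · norm_num
  · push_cast
    rw [show (1:ℝ) * Real.pi / 3 = Real.pi/3 by ring,
      Real.cos_pi_div_three, Real.sin_pi_div_three]
    have e1 : (Real.sqrt 3)⁻¹ * (Real.sqrt 3 / 2) = 1/2 := by
      field_simp
    rw [show (1:ℝ) * (1/2) + (Real.sqrt 3)⁻¹ * (Real.sqrt 3/2) = 1 by rw [e1]; norm_num]
    rw [show (1:ℝ) * (1/2) + -(Real.sqrt 3)⁻¹ * (Real.sqrt 3/2) = 0 by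
      field_simp; norm_num]
    rw [show (0:ℝ) * (1/2) + 2 * (Real.sqrt 3)⁻¹ * (Real.sqrt 3/2) = 1 by
      field_simp; norm_num]
    norm_num
  · push_cast
    rw [show (2:ℝ) * Real.pi / 3 = Real.pi - Real.pi/3 by ring,
      Real.cos_pi_sub, Real.sin_pi_sub, Real.cos_pi_div_three, Real.sin_pi_div_three]
    rw [show (1:ℝ) * -(1/2) + (Real.sqrt 3)⁻¹ * (Real.sqrt 3/2) = 0 by field_simp; norm_num]
    rw [show (1:ℝ) * -(1/2) + -(Real.sqrt 3)⁻¹ * (Real.sqrt 3/2) = -1 by field_simp; norm_num]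
    rw [show (0:ℝ) * -(1/2) + 2 * (Real.sqrt 3)⁻¹ * (Real.sqrt 3/2) = 1 by field_simp; norm_num]
    norm_num

lemma width6 (F : Fin 6 → ℝ) (c : Fin 6 → ℝ) (hc : ∀ i, |F (i + 1) - F i| ≤ c i)
    (a b : Fin 6) : 2 * (F a - F b) ≤ ∑ i, c i := by
  have h0 := abs_le.1 (hc 0)
  have h1 := abs_le.1 (hc 1)
  have h2 := abs_le.1 (hc 2)
  have h3 := abs_le.1 (hc 3)
  have h4 := abs_le.1 (hc 4)
  have h5 := abs_le.1 (hc 5)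
  have e0 : (0:Fin 6) + 1 = 1 := rfl
  have e1 : (1:Fin 6) + 1 = 2 := rfl
  have e2 : (2:Fin 6) + 1 = 3 := rfl
  have e3 : (3:Fin 6) + 1 = 4 := rfl
  have e4 : (4:Fin 6) + 1 = 5 := rfl
  have e5 : (5:Fin 6) + 1 = 0 := rfl
  rw [e0] at h0; rw [e1] at h1; rw [e2] at h2; rw [e3] at h3; rw [e4] at h4; rw [e5] at h5
  rw [Fin.sum_univ_six]
  fin_cases a <;> fin_cases b <;>
    simp only [show (⟨0, by omega⟩ : Fin 6) = 0 from rfl, show (⟨1, by omega⟩ : Fin 6) = 1 from rfl,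
      show (⟨2, by omega⟩ : Fin 6) = 2 from rfl, show (⟨3, by omega⟩ : Fin 6) = 3 from rfl,
      show (⟨4, by omega⟩ : Fin 6) = 4 from rfl, show (⟨5, by omega⟩ : Fin 6) = 5 from rfl] <;>
    obtain ⟨h0a, h0b⟩ := h0 <;> obtain ⟨h1a, h1b⟩ := h1 <;> obtain ⟨h2a, h2b⟩ := h2 <;>
    obtain ⟨h3a, h3b⟩ := h3 <;> obtain ⟨h4a, h4b⟩ := h4 <;> obtain ⟨h5a, h5b⟩ := h5 <;>
    linarith

lemma lint_lin_left (p l r : ℝ) (hpl : p ≤ l) (hlr : l ≤ r) :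
    ∫⁻ x in Set.Icc l r, ENNReal.ofReal (x - p)
      = ENNReal.ofReal ((r - p) ^ 2 / 2 - (l - p) ^ 2 / 2) := by
  rw [← ofReal_integral_eq_lintegral_ofReal]
  · congr 1
    rw [MeasureTheory.integral_Icc_eq_integral_Ioc, ← intervalIntegral.integral_of_le hlr]
    have : (∫ x in l..r, (x - p)) = (∫ x in l..r, x) - ∫ x in l..r, (p : ℝ) :=
      intervalIntegral.integral_sub (continuous_id.intervalIntegrable _ _) (intervalIntegrable_const)
    rw [this, integral_id, intervalIntegral.integral_const, smul_eq_mul]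
    ring
  · exact (continuous_id.sub continuous_const).integrableOn_Icc
  · refine (ae_restrict_iff' measurableSet_Icc).2 (Filter.Eventually.of_forall fun x hx => ?_)
    simp only [Pi.zero_apply]
    have := hx.1
    linarith

lemma lint_lin_right (q l r : ℝ) (hlr : l ≤ r) (hrq : r ≤ q) :
    ∫⁻ x in Set.Icc l r, ENNReal.ofReal (q - x)
      = ENNReal.ofReal ((q - l) ^ 2 / 2 - (q - r) ^ 2 / 2) := by
  rw [← ofReal_integral_eq_lintegral_ofReal]
  · congr 1
    rw [MeasureTheory.integral_Icc_eq_integral_Ioc, ← intervalIntegral.integral_of_le hlr]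
    have : (∫ x in l..r, (q - x)) = (∫ x in l..r, (q : ℝ)) - ∫ x in l..r, x :=
      intervalIntegral.integral_sub (intervalIntegrable_const) (continuous_id.intervalIntegrable _ _)
    rw [this, integral_id, intervalIntegral.integral_const, smul_eq_mul]
    ring
  · exact (continuous_const.sub continuous_id).integrableOn_Icc
  · refine (ae_restrict_iff' measurableSet_Icc).2 (Filter.Eventually.of_forall fun x hx => ?_)
    simp only [Pi.zero_apply]
    have := hx.2
    linarith

lemma case_left (X S b2 a2 : ℝ) (hX : 0 ≤ X) (hS : 0 ≤ S) (hb : b2 ≤ S / 2)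
    (ha : 0 ≤ a2) (hab : a2 ≤ b2) (hW : b2 - a2 ≤ X) :
    b2 ^ 2 / 2 - a2 ^ 2 / 2 ≤ (X + S) ^ 2 / 12 := by
  have hsq : ((b2 - a2) + S) ^ 2 ≤ (X + S) ^ 2 :=
    pow_le_pow_left₀ (by linarith) (by linarith) 2
  have hprod : (b2 - a2) * (b2 + a2) ≤ (b2 - a2) * (S - (b2 - a2)) :=
    mul_le_mul_of_nonneg_left (by linarith) (by linarith)
  nlinarith [sq_nonneg (7 * (b2 - a2) - 2 * S), sq_nonneg S]

lemma case_mid (X S u w : ℝ) (hX : 0 ≤ X) (hu : 0 ≤ u) (hv : 0 ≤ w)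
    (hu2 : u ≤ S / 2) (hv2 : w ≤ S / 2) (hW : S - u - w ≤ X) :
    ((S / 2) ^ 2 / 2 - u ^ 2 / 2) + ((S / 2) ^ 2 / 2 - w ^ 2 / 2) ≤ (X + S) ^ 2 / 12 := by
  have hsq : (2 * S - u - w) ^ 2 ≤ (X + S) ^ 2 :=
    pow_le_pow_left₀ (by linarith) (by linarith) 2
  nlinarith [sq_nonneg (S - 2 * (u + w)), sq_nonneg (u - w)]

lemma hexArea (a A c C e B : ℝ) (haA : a ≤ A) (hcC : c ≤ C) (heB : e ≤ B) :
    volume {x : ℝ × ℝ | x.1 ∈ Set.Icc a A ∧ x.2 ∈ Set.Icc c C ∧ x.1 - x.2 ∈ Set.Icc e B}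
      ≤ ENNReal.ofReal (((A - a) + (C - c) + (B - e)) ^ 2 / 12) := by
  set s : Set (ℝ × ℝ) :=
    {x : ℝ × ℝ | x.1 ∈ Set.Icc a A ∧ x.2 ∈ Set.Icc c C ∧ x.1 - x.2 ∈ Set.Icc e B} with hs_def
  have hs : MeasurableSet s := by
    have : s = (Prod.fst ⁻¹' Set.Icc a A) ∩ ((Prod.snd ⁻¹' Set.Icc c C) ∩
        ((fun x : ℝ × ℝ => x.1 - x.2) ⁻¹' Set.Icc e B)) := rfl
    rw [this]
    exact (measurableSet_Icc.preimage measurable_fst).inter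
      ((measurableSet_Icc.preimage measurable_snd).inter
        (measurableSet_Icc.preimage (measurable_fst.sub measurable_snd)))
  set p := c + e with hp
  set q := C + B with hq
  set S := q - p with hS
  have hS0 : 0 ≤ S := by simp [hS, hp, hq]; linarith
  have hX0 : 0 ≤ A - a := by linarith
  -- slice bound
  have hslice : ∀ x : ℝ, volume (Prod.mk x ⁻¹' s)
      ≤ (Set.Icc a A).indicator (fun x => ENNReal.ofReal (min (x - p) (q - x))) x := by
    intro x
    by_cases hx : x ∈ Set.Icc a A
    · rw [Set.indicator_of_mem hx]
      have hsub : Prod.mk x ⁻¹' s ⊆ Set.Icc (max c (x - B)) (min C (x - e)) := by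
        rintro y ⟨-, ⟨hy1, hy2⟩, hz1, hz2⟩
        exact ⟨max_le hy1 (by linarith), le_min hy2 (by linarith)⟩
      refine (measure_mono hsub).trans ?_
      rw [Real.volume_Icc]
      refine ENNReal.ofReal_le_ofReal (le_min ?_ ?_)
      · have h1 := min_le_right C (x - e)
        have h2 := le_max_left c (x - B)
        simp only [hp]; linarith
      · have h1 := min_le_left C (x - e)
        have h2 := le_max_right c (x - B)
        simp only [hq]; linarith
    · rw [Set.indicator_of_notMem hx]
      have : Prod.mk x ⁻¹' s = ∅ := by
        ext y; simp only [Set.mem_preimage, Set.mem_empty_iff_false, iff_false]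
        rintro ⟨h1, -, -⟩; exact hx h1
      rw [this, measure_empty]
  -- reduce to a 1-D integral
  have step1 : volume s ≤ ∫⁻ x in Set.Icc a A, ENNReal.ofReal (min (x - p) (q - x)) := by
    rw [Measure.volume_eq_prod, Measure.prod_apply hs]
    exact (lintegral_mono hslice).trans_eq (lintegral_indicator measurableSet_Icc _)
  -- the integrand vanishes outside [p,q]
  have hf_ind : (fun x => ENNReal.ofReal (min (x - p) (q - x)))
      = (Set.Icc p q).indicator (fun x => ENNReal.ofReal (min (x - p) (q - x))) := by
    funext x
    by_cases hx : x ∈ Set.Icc p q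
    · rw [Set.indicator_of_mem hx]
    · rw [Set.indicator_of_notMem hx]
      simp only [Set.mem_Icc, not_and_or, not_le] at hx
      rw [ENNReal.ofReal_eq_zero]
      rcases hx with h | h
      · exact le_trans (min_le_left _ _) (by linarith)
      · exact le_trans (min_le_right _ _) (by linarith)
  set a' := max p a with ha'
  set A' := min q A with hA'
  have step2 : (∫⁻ x in Set.Icc a A, ENNReal.ofReal (min (x - p) (q - x)))
      = ∫⁻ x in Set.Icc a' A', ENNReal.ofReal (min (x - p) (q - x)) := by
    conv_lhs => rw [hf_ind]
    rw [lintegral_indicator measurableSet_Icc, Measure.restrict_restrict measurableSet_Icc,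
      Set.Icc_inter_Icc]
  rw [step2] at step1
  refine step1.trans ?_
  rcases le_or_gt a' A' with hA'' | hA''
  swap
  · rw [Set.Icc_eq_empty (not_le.2 hA''), Measure.restrict_empty, lintegral_zero_measure]
    exact zero_le
  have hpa' : p ≤ a' := le_max_left _ _
  have haa' : a ≤ a' := le_max_right _ _
  have hA'q : A' ≤ q := min_le_left _ _
  have hA'A : A' ≤ A := min_le_right _ _
  have hRS : (A - a) + (C - c) + (B - e) = (A - a) + S := by rw [hS, hq, hp]; ring
  rw [hRS]
  have key : ∀ γ : ℝ, a' ≤ γ → γ ≤ A' →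
      (∫⁻ x in Set.Icc a' A', ENNReal.ofReal (min (x - p) (q - x)))
        ≤ ENNReal.ofReal (((γ - p) ^ 2 / 2 - (a' - p) ^ 2 / 2)
            + ((q - γ) ^ 2 / 2 - (q - A') ^ 2 / 2)) := by
    intro γ h1 h2
    have hsplit : Set.Icc a' A' = Set.Icc a' γ ∪ Set.Ioc γ A' :=
      (Set.Icc_union_Ioc_eq_Icc h1 h2).symm
    have hdisj : Disjoint (Set.Icc a' γ) (Set.Ioc γ A') := by
      refine Set.disjoint_left.2 fun x hx hx' => ?_
      exact absurd hx'.1 (not_lt.2 hx.2)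
    rw [hsplit, lintegral_union measurableSet_Ioc hdisj]
    have piece1 : (∫⁻ x in Set.Icc a' γ, ENNReal.ofReal (min (x - p) (q - x)))
        ≤ ENNReal.ofReal ((γ - p) ^ 2 / 2 - (a' - p) ^ 2 / 2) := by
      refine le_trans (lintegral_mono fun x => ENNReal.ofReal_le_ofReal (min_le_left _ _)) ?_
      rw [lint_lin_left p a' γ hpa' h1]
    have piece2 : (∫⁻ x in Set.Ioc γ A', ENNReal.ofReal (min (x - p) (q - x)))
        ≤ ENNReal.ofReal ((q - γ) ^ 2 / 2 - (q - A') ^ 2 / 2) := by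
      refine le_trans (lintegral_mono fun x => ENNReal.ofReal_le_ofReal (min_le_right _ _)) ?_
      refine le_trans (lintegral_mono' (Measure.restrict_mono Set.Ioc_subset_Icc_self le_rfl)
        le_rfl) ?_
      rw [lint_lin_right q γ A' h2 hA'q]
    refine le_trans (add_le_add piece1 piece2) ?_
    rw [← ENNReal.ofReal_add]
    · nlinarith [mul_nonneg (sub_nonneg.2 h1) (show (0:ℝ) ≤ γ + a' - 2 * p by linarith)]
    · nlinarith [mul_nonneg (sub_nonneg.2 h2) (show (0:ℝ) ≤ 2 * q - γ - A' by linarith)]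
  rcases le_total ((p + q) / 2) a' with hmid | hmid
  · refine (key a' le_rfl hA'').trans (ENNReal.ofReal_le_ofReal ?_)
    have := case_left (A - a) S (q - a') (q - A') hX0 hS0 (by linarith) (by linarith)
      (by linarith) (by linarith)
    linarith
  rcases le_total A' ((p + q) / 2) with hmid2 | hmid2
  · refine (key A' hA'' le_rfl).trans (ENNReal.ofReal_le_ofReal ?_)
    have := case_left (A - a) S (A' - p) (a' - p) hX0 hS0 (by linarith) (by linarith)
      (by linarith) (by linarith)
    linarith
  · refine (key ((p + q) / 2) hmid hmid2).trans (ENNReal.ofReal_le_ofReal ?_)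
    rw [show (p + q) / 2 - p = S / 2 by rw [hS]; ring, show q - (p + q) / 2 = S / 2 by
      rw [hS]; ring]
    have := case_mid (A - a) S (a' - p) (q - A') hX0 (by linarith) (by linarith)
      (by linarith) (by linarith) (by linarith)
    linarith

noncomputable def Tmap : EuclideanSpace ℝ (Fin 2) →ₗ[ℝ] EuclideanSpace ℝ (Fin 2) :=
  ((WithLp.linearEquiv 2 ℝ (Fin 2 → ℝ)).symm.toLinearMap).comp (LinearMap.pi ![ph0, ph2])

lemma Tmap_apply0 (x : EuclideanSpace ℝ (Fin 2)) : (Tmap x) 0 = ph0 x := rfl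
lemma Tmap_apply1 (x : EuclideanSpace ℝ (Fin 2)) : (Tmap x) 1 = ph2 x := rfl

lemma det_Tmap : LinearMap.det Tmap = 2 * (Real.sqrt 3)⁻¹ := by
  have hB : LinearMap.toMatrix (PiLp.basisFun 2 ℝ (Fin 2)) (PiLp.basisFun 2 ℝ (Fin 2)) Tmap
      = !![1, (Real.sqrt 3)⁻¹; 0, 2 * (Real.sqrt 3)⁻¹] := by
    ext i j
    rw [LinearMap.toMatrix_apply]
    fin_cases i <;> fin_cases j <;>
      simp [Tmap, ph0, ph2, PiLp.basisFun_apply, PiLp.basisFun_repr, lf_apply,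
        Matrix.cons_val_zero, Matrix.cons_val_one]
  rw [← LinearMap.det_toMatrix (PiLp.basisFun 2 ℝ (Fin 2)), hB, Matrix.det_fin_two_of]
  ring

lemma vol_SE (m0 M0 m2 M2 m1 M1 : ℝ) :
    volume {y : EuclideanSpace ℝ (Fin 2) | y 0 ∈ Set.Icc m0 M0 ∧ y 1 ∈ Set.Icc m2 M2 ∧
        y 0 - y 1 ∈ Set.Icc m1 M1}
      = volume {x : ℝ × ℝ | x.1 ∈ Set.Icc m0 M0 ∧ x.2 ∈ Set.Icc m2 M2 ∧
        x.1 - x.2 ∈ Set.Icc m1 M1} := by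
  have h1 := EuclideanSpace.volume_preserving_symm_measurableEquiv_toLp (Fin 2)
  have h2 := volume_preserving_finTwoArrow ℝ
  have hset : {y : EuclideanSpace ℝ (Fin 2) | y 0 ∈ Set.Icc m0 M0 ∧ y 1 ∈ Set.Icc m2 M2 ∧
        y 0 - y 1 ∈ Set.Icc m1 M1}
      = ((MeasurableEquiv.toLp 2 (Fin 2 → ℝ)).symm) ⁻¹'
        ((MeasurableEquiv.finTwoArrow : (Fin 2 → ℝ) ≃ᵐ ℝ × ℝ) ⁻¹'
          {x : ℝ × ℝ | x.1 ∈ Set.Icc m0 M0 ∧ x.2 ∈ Set.Icc m2 M2 ∧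
            x.1 - x.2 ∈ Set.Icc m1 M1}) := rfl
  rw [hset, h1.measure_preimage_equiv, h2.measure_preimage_equiv]

/-- A (possibly degenerate) hexagon whose sides are parallel to the sides of a fixed
regular hexagon satisfies `A(H) ≤ (√3/24)·b(H)²`. -/
theorem hexagon_isoperimetric (v : Fin 6 → EuclideanSpace ℝ (Fin 2))
    (hpar : ∀ i : Fin 6, ∃ (k : Fin 3) (t : ℝ), v (i + 1) - v i = t • hexDir k) :
    (volume (convexHull ℝ (Set.range v))).toReal ≤
      (Real.sqrt 3 / 24) * (∑ i : Fin 6, dist (v i) (v (i + 1))) ^ 2 := by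
  classical
  set b := ∑ i : Fin 6, dist (v i) (v (i + 1)) with hbdef
  have hb0 : 0 ≤ b := Finset.sum_nonneg fun i _ => dist_nonneg
  -- edge estimate
  have hedge : ∀ i : Fin 6,
      |ph0 (v (i + 1)) - ph0 (v i)| + |ph1 (v (i + 1)) - ph1 (v i)|
        + |ph2 (v (i + 1)) - ph2 (v i)| ≤ 2 * dist (v i) (v (i + 1)) := by
    intro i
    obtain ⟨k, t, ht⟩ := hpar i
    have hd : dist (v i) (v (i + 1)) = |t| := by
      rw [dist_eq_norm', ht, norm_smul, norm_hexDir, Real.norm_eq_abs, mul_one]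
    have e0 : ph0 (v (i + 1)) - ph0 (v i) = t * ph0 (hexDir k) := by
      rw [← map_sub, ht, _root_.map_smul, smul_eq_mul]
    have e1 : ph1 (v (i + 1)) - ph1 (v i) = t * ph1 (hexDir k) := by
      rw [← map_sub, ht, _root_.map_smul, smul_eq_mul]
    have e2 : ph2 (v (i + 1)) - ph2 (v i) = t * ph2 (hexDir k) := by
      rw [← map_sub, ht, _root_.map_smul, smul_eq_mul]
    rw [e0, e1, e2, abs_mul, abs_mul, abs_mul, hd]
    have hk := abs_sum_hexDir k
    have h2 : |t| * (|ph0 (hexDir k)| + |ph1 (hexDir k)| + |ph2 (hexDir k)|) ≤ |t| * 2 :=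
      mul_le_mul_of_nonneg_left hk (abs_nonneg t)
    nlinarith [abs_nonneg t]
  -- extrema of the three functionals over the vertices
  obtain ⟨i0, -, hmax0⟩ := Finset.exists_max_image Finset.univ (fun i => ph0 (v i))
    ⟨0, Finset.mem_univ 0⟩
  obtain ⟨j0, -, hmin0⟩ := Finset.exists_min_image Finset.univ (fun i => ph0 (v i))
    ⟨0, Finset.mem_univ 0⟩
  obtain ⟨i1, -, hmax1⟩ := Finset.exists_max_image Finset.univ (fun i => ph1 (v i))
    ⟨0, Finset.mem_univ 0⟩
  obtain ⟨j1, -, hmin1⟩ := Finset.exists_min_image Finset.univ (fun i => ph1 (v i))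
    ⟨0, Finset.mem_univ 0⟩
  obtain ⟨i2, -, hmax2⟩ := Finset.exists_max_image Finset.univ (fun i => ph2 (v i))
    ⟨0, Finset.mem_univ 0⟩
  obtain ⟨j2, -, hmin2⟩ := Finset.exists_min_image Finset.univ (fun i => ph2 (v i))
    ⟨0, Finset.mem_univ 0⟩
  set M0 := ph0 (v i0) with hM0
  set m0 := ph0 (v j0) with hm0
  set M1 := ph1 (v i1) with hM1
  set m1 := ph1 (v j1) with hm1
  set M2 := ph2 (v i2) with hM2
  set m2 := ph2 (v j2) with hm2
  have hW0 : 2 * (M0 - m0) ≤ ∑ i, |ph0 (v (i + 1)) - ph0 (v i)| :=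
    width6 (fun i => ph0 (v i)) (fun i => |ph0 (v (i + 1)) - ph0 (v i)|) (fun i => le_rfl) i0 j0
  have hW1 : 2 * (M1 - m1) ≤ ∑ i, |ph1 (v (i + 1)) - ph1 (v i)| :=
    width6 (fun i => ph1 (v i)) (fun i => |ph1 (v (i + 1)) - ph1 (v i)|) (fun i => le_rfl) i1 j1
  have hW2 : 2 * (M2 - m2) ≤ ∑ i, |ph2 (v (i + 1)) - ph2 (v i)| :=
    width6 (fun i => ph2 (v i)) (fun i => |ph2 (v (i + 1)) - ph2 (v i)|) (fun i => le_rfl) i2 j2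
  have hWb : (M0 - m0) + (M1 - m1) + (M2 - m2) ≤ b := by
    have hsum : ((∑ i, |ph0 (v (i + 1)) - ph0 (v i)|) + (∑ i, |ph1 (v (i + 1)) - ph1 (v i)|))
        + (∑ i, |ph2 (v (i + 1)) - ph2 (v i)|) ≤ 2 * b := by
      rw [hbdef, Finset.mul_sum, ← Finset.sum_add_distrib, ← Finset.sum_add_distrib]
      exact Finset.sum_le_sum fun i _ => hedge i
    linarith
  have hm0M0 : m0 ≤ M0 := hmin0 i0 (Finset.mem_univ i0)
  have hm1M1 : m1 ≤ M1 := hmin1 i1 (Finset.mem_univ i1)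
  have hm2M2 : m2 ≤ M2 := hmin2 i2 (Finset.mem_univ i2)
  set SE := {y : EuclideanSpace ℝ (Fin 2) | y 0 ∈ Set.Icc m0 M0 ∧ y 1 ∈ Set.Icc m2 M2 ∧
      y 0 - y 1 ∈ Set.Icc m1 M1} with hSEdef
  have hconv : Convex ℝ SE := by
    have hEq : SE = (lf 1 0) ⁻¹' Set.Icc m0 M0 ∩ ((lf 0 1) ⁻¹' Set.Icc m2 M2 ∩
        (lf 1 (-1)) ⁻¹' Set.Icc m1 M1) := by
      ext y
      simp only [hSEdef, Set.mem_setOf_eq, Set.mem_inter_iff, Set.mem_preimage, lf_apply,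
        Set.mem_Icc, one_mul, zero_mul, add_zero, zero_add, neg_one_mul, neg_mul]
      constructor
      · rintro ⟨h1, h2, h3⟩
        refine ⟨h1, h2, ?_⟩
        constructor <;> [linarith [h3.1]; linarith [h3.2]]
      · rintro ⟨h1, h2, h3⟩
        refine ⟨h1, h2, ?_⟩
        constructor <;> [linarith [h3.1]; linarith [h3.2]]
    rw [hEq]
    exact ((convex_Icc _ _).linear_preimage _).inter
      (((convex_Icc _ _).linear_preimage _).inter ((convex_Icc _ _).linear_preimage _))
  have hhull : convexHull ℝ (Set.range v) ⊆ Tmap ⁻¹' SE := by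
    refine convexHull_min ?_ (hconv.linear_preimage Tmap)
    rintro x ⟨i, rfl⟩
    have h3 : (Tmap (v i)) 0 - (Tmap (v i)) 1 = ph1 (v i) := by
      rw [Tmap_apply0, Tmap_apply1, ← ph1_eq]
    refine ⟨⟨hmin0 i (Finset.mem_univ i), hmax0 i (Finset.mem_univ i)⟩,
      ⟨hmin2 i (Finset.mem_univ i), hmax2 i (Finset.mem_univ i)⟩, ?_⟩
    rw [Set.mem_Icc, h3]
    exact ⟨hmin1 i (Finset.mem_univ i), hmax1 i (Finset.mem_univ i)⟩
  have hdet : LinearMap.det Tmap ≠ 0 := by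
    rw [det_Tmap]
    have h3 : (0:ℝ) < Real.sqrt 3 := Real.sqrt_pos.mpr (by norm_num)
    positivity
  have hpre : volume (Tmap ⁻¹' SE) = ENNReal.ofReal (Real.sqrt 3 / 2) * volume SE := by
    rw [Measure.addHaar_preimage_linearMap volume hdet SE, det_Tmap]
    congr 1
    have hinv : (2 * (Real.sqrt 3)⁻¹)⁻¹ = Real.sqrt 3 / 2 := by
      rw [mul_inv, inv_inv]; ring
    rw [hinv, abs_of_nonneg (by positivity)]
  have hSEvol : volume SE ≤ ENNReal.ofReal (((M0 - m0) + (M2 - m2) + (M1 - m1)) ^ 2 / 12) := by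
    rw [hSEdef, vol_SE]
    exact hexArea m0 M0 m2 M2 m1 M1 hm0M0 hm2M2 hm1M1
  have hfinal : volume (convexHull ℝ (Set.range v)) ≤
      ENNReal.ofReal (Real.sqrt 3 / 24 * b ^ 2) := by
    refine (measure_mono hhull).trans ?_
    rw [hpre]
    refine le_trans (mul_le_mul_right hSEvol _) ?_
    rw [← ENNReal.ofReal_mul (by positivity)]
    refine ENNReal.ofReal_le_ofReal ?_
    have hWsum : (M0 - m0) + (M2 - m2) + (M1 - m1) ≤ b := by linarith
    have hWnn : 0 ≤ (M0 - m0) + (M2 - m2) + (M1 - m1) := by linarith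
    have hpow := pow_le_pow_left₀ hWnn hWsum 2
    have hs3 : 0 ≤ Real.sqrt 3 := Real.sqrt_nonneg 3
    nlinarith
  exact ENNReal.toReal_le_of_le_ofReal (by positivity) hfinal
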